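/- arXiv:2403.12791 — 2 statements merged into one kernel-verified Lean document; each statement's English description precedes it below -/
import Mathlib

section
/- Let u be the Sturmian sequence with slope α and intercept 0, a = 1^ω, b the Sturmian sequence over {2,3} with slope γ and intercept 0, and v = colour(u, a, b). Then for every n ∈ ℕ: v_n = 1 iff {αn} ∈ [0,1−α); v_n = 2 iff {αn} ∈ [1−α,1) and {γ⌊αn⌋} ∈ [0,1−γ); v_n = 3 iff {αn} ∈ [1−α,1) and {γ⌊αn⌋} ∈ [1−γ,1). Equivalently, v_n = i iff Sⁿ(0,0) ∈ R_i for the rectangle exchange S with rectangles R₁, R₂, R₃. -/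
open scoped Classical

/-- The factor of length `n` of the sequence `s` starting at position `i`. -/
def fac {A : Type*} (s : ℕ → A) (i n : ℕ) : List A :=
  (List.range n).map (fun j => s (i + j))

/-- Sturmian sequence with slope `α` and intercept `ρ`:
`true` codes letter b (interval `[1-α,1)`), `false` codes letter a. -/
noncomputable def sturmian (α ρ : ℝ) (n : ℕ) : Bool :=
  if 1 - α ≤ Int.fract (ρ + n * α) then true else false

/-- Sturmian sequence over the alphabet `{2,3}` with slope `γ` and intercept `ρ`. -/
noncomputable def sturmian23 (γ ρ : ℝ) (n : ℕ) : ℕ :=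
  if 1 - γ ≤ Int.fract (ρ + n * γ) then 3 else 2

/-- Number of positions `k < n` with `u k = true` (letter `b`). -/
def countB (u : ℕ → Bool) (n : ℕ) : ℕ :=
  ((Finset.range n).filter (fun k => u k = true)).card

/-- Number of positions `k < n` with `u k = false` (letter `a`). -/
def countA (u : ℕ → Bool) (n : ℕ) : ℕ :=
  ((Finset.range n).filter (fun k => u k = false)).card

/-- Colouring of a binary sequence `u` by sequences `a` and `b`. -/
def colour {A : Type*} (u : ℕ → Bool) (a b : ℕ → A) (n : ℕ) : A :=
  if u n then b (countB u n) else a (countA u n)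

/-- The rectangle exchange transformation on `[0,1)²` with parameters `α, γ`. -/
noncomputable def rectS (α γ : ℝ) (p : ℝ × ℝ) : ℝ × ℝ :=
  if p.1 < 1 - α then (Int.fract (p.1 + α), p.2)
  else (Int.fract (p.1 + α), Int.fract (p.2 + γ))

lemma floor_step (α : ℝ) (hα : α ∈ Set.Ioo (0:ℝ) 1) (x : ℝ) :
    ⌊x + α⌋ = ⌊x⌋ + (if 1 - α ≤ Int.fract x then 1 else 0) := by
  obtain ⟨h0, h1⟩ := hα
  have hf0 := Int.fract_nonneg x
  have hf1 := Int.fract_lt_one x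
  have h : x + α = (Int.fract x + α) + ⌊x⌋ := by rw [Int.fract]; ring
  rw [h, Int.floor_add_intCast]
  split_ifs with hc
  · have : ⌊Int.fract x + α⌋ = 1 := by
      rw [Int.floor_eq_iff]
      push_cast
      constructor <;> linarith
    omega
  · push_neg at hc
    have : ⌊Int.fract x + α⌋ = 0 := by
      rw [Int.floor_eq_zero_iff, Set.mem_Ico]
      constructor <;> linarith
    omega

lemma sturm_true (α : ℝ) (n : ℕ) :
    sturmian α 0 n = true ↔ 1 - α ≤ Int.fract (α * n) := by
  unfold sturmian
  rw [show (0:ℝ) + n * α = α * n by ring]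
  split_ifs with h <;> simp [h]

lemma countB_succ (u : ℕ → Bool) (n : ℕ) :
    countB u (n + 1) = countB u n + (if u n then 1 else 0) := by
  unfold countB
  rw [Finset.range_add_one, Finset.filter_insert]
  split_ifs with h <;> simp [h, Finset.card_insert_of_notMem]

lemma countB_eq (α : ℝ) (hα : α ∈ Set.Ioo (0:ℝ) 1) (n : ℕ) :
    (countB (sturmian α 0) n : ℤ) = ⌊α * n⌋ := by
  induction n with
  | zero => simp [countB]
  | succ n ih =>
      rw [countB_succ, show (α * (n+1:ℕ) : ℝ) = α * n + α by push_cast; ring,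
        floor_step α hα]
      rw [← ih]
      by_cases h : 1 - α ≤ Int.fract (α * n)
      · rw [if_pos ((sturm_true α n).mpr h), if_pos h]; push_cast; ring
      · rw [if_neg (fun hc => h ((sturm_true α n).mp hc)), if_neg h]; push_cast; ring

lemma fract_fract_add (x α : ℝ) : Int.fract (Int.fract x + α) = Int.fract (x + α) := by
  have h : Int.fract x + α = (x + α) - ⌊x⌋ := by rw [Int.fract]; ring
  rw [h, Int.fract_sub_intCast]

lemma iter_eq (α γ : ℝ) (hα : α ∈ Set.Ioo (0:ℝ) 1) (n : ℕ) :
    (rectS α γ)^[n] (0, 0) =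
      (Int.fract (α * n), Int.fract (γ * (⌊α * (n:ℝ)⌋ : ℤ))) := by
  induction n with
  | zero => simp
  | succ n ih =>
      rw [Function.iterate_succ_apply', ih]
      have hstep : (α * ((n+1 : ℕ) : ℝ)) = α * (n:ℝ) + α := by push_cast; ring
      unfold rectS
      dsimp only
      by_cases h : Int.fract (α * (n:ℝ)) < 1 - α
      · rw [if_pos h]
        have hfl : ⌊α * (n:ℝ) + α⌋ = ⌊α * (n:ℝ)⌋ := by
          rw [floor_step α hα, if_neg (not_le.mpr h)]; ring
        rw [hstep, hfl, fract_fract_add]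
      · rw [if_neg h]
        push_neg at h
        have hfl : ⌊α * (n:ℝ) + α⌋ = ⌊α * (n:ℝ)⌋ + 1 := by
          rw [floor_step α hα, if_pos h]
        rw [hstep, hfl, fract_fract_add, fract_fract_add]
        congr 2
        push_cast
        ring

theorem stmt_9 (α γ : ℝ) (hα : α ∈ Set.Ioo (0:ℝ) 1) (hirrα : Irrational α)
    (hγ : γ ∈ Set.Ioo (0:ℝ) 1) (hirrγ : Irrational γ) (n : ℕ) :
    (colour (sturmian α 0) (fun _ => 1) (sturmian23 γ 0) n = 1 ↔
        Int.fract (α * n) ∈ Set.Ico (0:ℝ) (1 - α)) ∧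
    (colour (sturmian α 0) (fun _ => 1) (sturmian23 γ 0) n = 2 ↔
        (Int.fract (α * n) ∈ Set.Ico (1 - α) 1 ∧
          Int.fract (γ * ⌊α * (n : ℝ)⌋) ∈ Set.Ico (0:ℝ) (1 - γ))) ∧
    (colour (sturmian α 0) (fun _ => 1) (sturmian23 γ 0) n = 3 ↔
        (Int.fract (α * n) ∈ Set.Ico (1 - α) 1 ∧
          Int.fract (γ * ⌊α * (n : ℝ)⌋) ∈ Set.Ico (1 - γ) 1)) ∧
    (colour (sturmian α 0) (fun _ => 1) (sturmian23 γ 0) n = 1 ↔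
        (rectS α γ)^[n] (0, 0) ∈ Set.Ico (0:ℝ) (1 - α) ×ˢ Set.Ico (0:ℝ) 1) ∧
    (colour (sturmian α 0) (fun _ => 1) (sturmian23 γ 0) n = 2 ↔
        (rectS α γ)^[n] (0, 0) ∈ Set.Ico (1 - α) 1 ×ˢ Set.Ico (0:ℝ) (1 - γ)) ∧
    (colour (sturmian α 0) (fun _ => 1) (sturmian23 γ 0) n = 3 ↔
        (rectS α γ)^[n] (0, 0) ∈ Set.Ico (1 - α) 1 ×ˢ Set.Ico (1 - γ) 1) := by
  have hf0 := Int.fract_nonneg (α * (n:ℝ))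
  have hf1 := Int.fract_lt_one (α * (n:ℝ))
  have hg0 := Int.fract_nonneg (γ * ((⌊α * (n:ℝ)⌋ : ℤ) : ℝ))
  have hg1 := Int.fract_lt_one (γ * ((⌊α * (n:ℝ)⌋ : ℤ) : ℝ))
  have hiter := iter_eq α γ hα n
  have hm : ((countB (sturmian α 0) n : ℕ) : ℝ) = ((⌊α * (n:ℝ)⌋ : ℤ) : ℝ) := by
    exact_mod_cast countB_eq α hα n
  have harg : (0:ℝ) + (countB (sturmian α 0) n : ℝ) * γ
      = γ * ((⌊α * (n:ℝ)⌋ : ℤ) : ℝ) := by rw [hm]; ring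
  by_cases hb : 1 - α ≤ Int.fract (α * (n:ℝ))
  · have hun : sturmian α 0 n = true := (sturm_true α n).mpr hb
    have hcol : colour (sturmian α 0) (fun _ => 1) (sturmian23 γ 0) n
        = sturmian23 γ 0 (countB (sturmian α 0) n) := by simp [colour, hun]
    by_cases hb2 : 1 - γ ≤ Int.fract (γ * ((⌊α * (n:ℝ)⌋ : ℤ) : ℝ))
    · have hc : colour (sturmian α 0) (fun _ => 1) (sturmian23 γ 0) n = 3 := by
        rw [hcol]; unfold sturmian23; rw [harg, if_pos hb2]
      refine ⟨?_, ?_, ?_, ?_, ?_, ?_⟩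
      · exact iff_of_false (by rw [hc]; norm_num)
          (fun hmem => absurd hb (not_le.mpr (Set.mem_Ico.mp hmem).2))
      · exact iff_of_false (by rw [hc]; norm_num)
          (fun hmem => absurd hb2 (not_le.mpr (Set.mem_Ico.mp hmem.2).2))
      · exact iff_of_true hc
          ⟨Set.mem_Ico.mpr ⟨hb, hf1⟩, Set.mem_Ico.mpr ⟨hb2, hg1⟩⟩
      · rw [hiter]
        exact iff_of_false (by rw [hc]; norm_num)
          (fun hmem => absurd hb (not_le.mpr (Set.mem_Ico.mp hmem.1).2))
      · rw [hiter]
        exact iff_of_false (by rw [hc]; norm_num)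
          (fun hmem => absurd hb2 (not_le.mpr (Set.mem_Ico.mp hmem.2).2))
      · rw [hiter]
        exact iff_of_true hc
          (Set.mem_prod.mpr ⟨Set.mem_Ico.mpr ⟨hb, hf1⟩, Set.mem_Ico.mpr ⟨hb2, hg1⟩⟩)
    · push_neg at hb2
      have hc : colour (sturmian α 0) (fun _ => 1) (sturmian23 γ 0) n = 2 := by
        rw [hcol]; unfold sturmian23; rw [harg, if_neg (not_le.mpr hb2)]
      refine ⟨?_, ?_, ?_, ?_, ?_, ?_⟩
      · exact iff_of_false (by rw [hc]; norm_num)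
          (fun hmem => absurd hb (not_le.mpr (Set.mem_Ico.mp hmem).2))
      · exact iff_of_true hc
          ⟨Set.mem_Ico.mpr ⟨hb, hf1⟩, Set.mem_Ico.mpr ⟨hg0, hb2⟩⟩
      · exact iff_of_false (by rw [hc]; norm_num)
          (fun hmem => absurd (Set.mem_Ico.mp hmem.2).1 (not_le.mpr hb2))
      · rw [hiter]
        exact iff_of_false (by rw [hc]; norm_num)
          (fun hmem => absurd hb (not_le.mpr (Set.mem_Ico.mp hmem.1).2))
      · rw [hiter]
        exact iff_of_true hc
          (Set.mem_prod.mpr ⟨Set.mem_Ico.mpr ⟨hb, hf1⟩, Set.mem_Ico.mpr ⟨hg0, hb2⟩⟩)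
      · rw [hiter]
        exact iff_of_false (by rw [hc]; norm_num)
          (fun hmem => absurd (Set.mem_Ico.mp hmem.2).1 (not_le.mpr hb2))
  · push_neg at hb
    have hun : sturmian α 0 n = false := by
      rcases Bool.eq_false_or_eq_true (sturmian α 0 n) with h | h
      · exact absurd ((sturm_true α n).mp h) (not_le.mpr hb)
      · exact h
    have hc : colour (sturmian α 0) (fun _ => 1) (sturmian23 γ 0) n = 1 := by
      simp [colour, hun]
    refine ⟨?_, ?_, ?_, ?_, ?_, ?_⟩
    · exact iff_of_true hc (Set.mem_Ico.mpr ⟨hf0, hb⟩)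
    · exact iff_of_false (by rw [hc]; norm_num)
        (fun hmem => absurd (Set.mem_Ico.mp hmem.1).1 (not_le.mpr hb))
    · exact iff_of_false (by rw [hc]; norm_num)
        (fun hmem => absurd (Set.mem_Ico.mp hmem.1).1 (not_le.mpr hb))
    · rw [hiter]
      exact iff_of_true hc
        (Set.mem_prod.mpr ⟨Set.mem_Ico.mpr ⟨hf0, hb⟩, Set.mem_Ico.mpr ⟨hg0, hg1⟩⟩)
    · rw [hiter]
      exact iff_of_false (by rw [hc]; norm_num)
        (fun hmem => absurd (Set.mem_Ico.mp hmem.1).1 (not_le.mpr hb))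
    · rw [hiter]
      exact iff_of_false (by rw [hc]; norm_num)
        (fun hmem => absurd (Set.mem_Ico.mp hmem.1).1 (not_le.mpr hb))
end

section
/- Let 1, α, αγ be rationally independent, u Sturmian with slope α, b Sturmian over {2,3} with slope γ, and v = colour(u, 1^ω, b). Then the abelian complexity of v satisfies C^{ab}_v(n) = 4 for every n ≥ ⌈1/α⌉, and C^{ab}_v(n) = 3 for 1 ≤ n ≤ ⌊1/α⌋. -/
open scoped Classical

/-!
Write `x_i = {ρ₁ + i α}` and `y_i = {ρ₂ + (⌊ρ₁ + i α⌋ - ⌊ρ₁⌋) γ}`. The factor of `v` of length `n`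
at position `i` contains `K = ⌊n α + x_i⌋` letters taken from `b`, of which `J = ⌊K γ + y_i⌋` are 3s,
so its Parikh vector is `(n - K, K - J, J)`. By Kronecker's theorem for the rationally independent
`1, α, α γ`, the points `(x_i, y_i)` enter every box `[x, x + δ) × [y, y + δ)` in `[0,1)²`; since
`(K, J)` is constant on such a box for small `δ`, it takes exactly the values it takes on `[0,1)²`.
There `K ∈ {⌊n α⌋, ⌊n α⌋ + 1}` (both occur as `n α ∉ ℤ`), and each `K` allows two values of `J`,
or one when `K γ ∈ ℤ`, i.e. when `K = 0`: this gives `2 + 2` for `n α > 1` and `1 + 2` for `n α < 1`.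

Kronecker's theorem in the plane follows the classical route: small nonzero elements of `ℤ θ + ℤ²`
put a line `ℝ a` into its closure, and the image of `ℤ θ + ℤ²` under `w ↦ a.1 w.2 - a.2 w.1` is a
subgroup of `ℝ` which cannot be cyclic without a rational relation, hence is dense.
-/

open Set Filter Topology

section Floor

variable {R : Type*} [Field R] [LinearOrder R] [IsStrictOrderedRing R] [FloorRing R]

lemma Int.floor_add_sub_floor (x t : R) : ⌊x + t⌋ - ⌊x⌋ = ⌊t + Int.fract x⌋ := by
  rw [sub_eq_iff_eq_add, ← Int.floor_add_intCast, ← Int.self_sub_floor]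
  ring_nf

lemma Int.floor_add_of_mem_Ico (s : R) {x : R} (hx : x ∈ Ico 0 1) :
    ⌊s + x⌋ = ⌊s⌋ + if 1 - Int.fract s ≤ x then 1 else 0 := by
  rw [← sub_eq_iff_eq_add', Int.floor_add_sub_floor, Int.floor_eq_iff]
  have := Int.fract_nonneg s
  have := Int.fract_lt_one s
  split_ifs <;> constructor <;> push_cast <;> linarith [hx.1, hx.2]

lemma Int.floor_eq_of_mem_Ico {z z' : R} (h : z' ∈ Ico z (z + (1 - Int.fract z))) :
    ⌊z'⌋ = ⌊z⌋ := by
  rw [Int.floor_eq_iff]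
  have := Int.floor_le z
  constructor <;> linarith [h.1, h.2, Int.self_sub_floor z]

end Floor

lemma Irrational.fract_intCast_mul_ne_zero {x : ℝ} (hx : Irrational x) {k : ℤ} (hk : k ≠ 0) :
    Int.fract (k * x) ≠ 0 :=
  Int.fract_ne_zero_iff.2 fun ⟨m, hm⟩ => (hx.intCast_mul hk).ne_int m hm.symm

lemma fac_succ {A : Type*} (s : ℕ → A) (i n : ℕ) : fac s i (n + 1) = fac s i n ++ [s (i + n)] := by
  simp [fac, List.range_succ]

lemma length_fac {A : Type*} (s : ℕ → A) (i n : ℕ) : (fac s i n).length = n := by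
  simp [fac]

lemma fac_comp {A B : Type*} (f : A → B) (s : ℕ → A) (i n : ℕ) :
    fac (f ∘ s) i n = (fac s i n).map f := by
  simp [fac]

lemma fac_const {A : Type*} (a : A) (i n : ℕ) : fac (fun _ => a) i n = List.replicate n a := by
  simp [fac]

lemma countB_add_one (u : ℕ → Bool) (k : ℕ) :
    countB u (k + 1) = countB u k + if u k then 1 else 0 := by
  rw [countB, countB, Finset.range_add_one, Finset.filter_insert]
  cases u k
  · rfl
  · exact Finset.card_insert_of_notMem (by simp)

lemma countA_add_one (u : ℕ → Bool) (k : ℕ) :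
    countA u (k + 1) = countA u k + if u k then 0 else 1 := by
  rw [countA, countA, Finset.range_add_one, Finset.filter_insert]
  cases u k
  · exact Finset.card_insert_of_notMem (by simp)
  · rfl

lemma countB_add (u : ℕ → Bool) (i n : ℕ) :
    countB u (i + n) = countB u i + (fac u i n).count true := by
  induction n with
  | zero => simp [fac]
  | succ n ih =>
    rw [← add_assoc, countB_add_one, ih, fac_succ, List.count_append]
    cases u (i + n) <;> simp [add_assoc]

lemma countA_add (u : ℕ → Bool) (i n : ℕ) :
    countA u (i + n) = countA u i + (fac u i n).count false := by
  induction n with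
  | zero => simp [fac]
  | succ n ih =>
    rw [← add_assoc, countA_add_one, ih, fac_succ, List.count_append]
    cases u (i + n) <;> simp [add_assoc]

lemma count_fac_colour {A : Type*} [DecidableEq A] (u : ℕ → Bool) (a b : ℕ → A) (c : A) (i n : ℕ) :
    (fac (colour u a b) i n).count c =
      (fac a (countA u i) ((fac u i n).count false)).count c +
        (fac b (countB u i) ((fac u i n).count true)).count c := by
  induction n with
  | zero => simp [fac]
  | succ n ih =>
    rw [fac_succ, fac_succ, List.count_append, ih, colour, countA_add, countB_add]
    cases u (i + n) <;> simp [fac_succ, List.count_append] <;> ring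

lemma count_true_fac_sturmian {α : ℝ} (hα : α ∈ Ico 0 1) (ρ : ℝ) (i n : ℕ) :
    ((fac (sturmian α ρ) i n).count true : ℤ) = ⌊ρ + (i + n : ℕ) * α⌋ - ⌊ρ + i * α⌋ := by
  induction n with
  | zero => simp [fac]
  | succ n ih =>
    have hstep : ρ + (i + (n + 1) : ℕ) * α = (ρ + (i + n : ℕ) * α) + α := by push_cast; ring
    rw [fac_succ, List.count_append, Nat.cast_add, ih, hstep, Int.floor_add_of_mem_Ico _ hα,
      sturmian]
    by_cases h : 1 - α ≤ Int.fract (ρ + (i + n : ℕ) * α)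
    · rw [if_pos h, if_pos (by linarith)]
      simp only [List.count_singleton_self, Nat.cast_one]
      ring
    · rw [if_neg h, if_neg (by linarith)]
      simp

lemma countB_sturmian {α : ℝ} (hα : α ∈ Ico 0 1) (ρ : ℝ) (i : ℕ) :
    (countB (sturmian α ρ) i : ℤ) = ⌊ρ + i * α⌋ - ⌊ρ⌋ := by
  rw [← zero_add i, countB_add, Nat.cast_add, count_true_fac_sturmian hα]
  simp [countB]

lemma sturmian23_eq_comp (γ ρ : ℝ) :
    sturmian23 γ ρ = (fun x : Bool => if x then 3 else 2) ∘ sturmian γ ρ := by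
  ext k
  simp only [sturmian23, sturmian, Function.comp]
  split_ifs <;> simp_all

lemma count_fac_sturmian23 (γ ρ : ℝ) (i n : ℕ) :
    (fac (sturmian23 γ ρ) i n).count 1 = 0 ∧
      (fac (sturmian23 γ ρ) i n).count 2 = (fac (sturmian γ ρ) i n).count false ∧
      (fac (sturmian23 γ ρ) i n).count 3 = (fac (sturmian γ ρ) i n).count true := by
  have hf : Function.Injective (fun x : Bool => if x then 3 else 2) := by decide
  rw [sturmian23_eq_comp, fac_comp]
  exact ⟨List.count_eq_zero.2 (by simp), List.count_map_of_injective _ _ hf false,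
    List.count_map_of_injective _ _ hf true⟩

noncomputable def cell (t γ : ℝ) (w : ℝ × ℝ) : ℤ × ℤ := (⌊t + w.1⌋, ⌊⌊t + w.1⌋ * γ + w.2⌋)

def floorWindow (s : ℝ) : Set ℤ := (fun x => ⌊s + x⌋) '' Ico 0 1

lemma floorWindow_of_fract_eq_zero {s : ℝ} (hs : Int.fract s = 0) : floorWindow s = {⌊s⌋} := by
  ext k
  simp only [floorWindow, mem_image, mem_singleton_iff]
  constructor
  · rintro ⟨x, hx, rfl⟩
    rw [Int.floor_add_of_mem_Ico s hx, if_neg (by linarith [hx.2]), add_zero]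
  · rintro rfl
    exact ⟨0, ⟨le_rfl, one_pos⟩, by rw [add_zero]⟩

lemma floorWindow_of_fract_ne_zero {s : ℝ} (hs : Int.fract s ≠ 0) :
    floorWindow s = {⌊s⌋, ⌊s⌋ + 1} := by
  have hpos := (Int.fract_nonneg s).lt_of_ne' hs
  have hlt := Int.fract_lt_one s
  ext k
  simp only [floorWindow, mem_image, mem_insert_iff, mem_singleton_iff]
  constructor
  · rintro ⟨x, hx, rfl⟩
    rw [Int.floor_add_of_mem_Ico s hx]
    split_ifs <;> simp
  · rintro (rfl | rfl)
    · exact ⟨0, ⟨le_rfl, one_pos⟩, by rw [add_zero]⟩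
    · refine ⟨1 - Int.fract s, ⟨by linarith, by linarith⟩, ?_⟩
      rw [Int.floor_add_of_mem_Ico s ⟨by linarith, by linarith⟩, if_pos le_rfl]

lemma ncard_floorWindow (s : ℝ) :
    (floorWindow s).ncard = if Int.fract s = 0 then 1 else 2 := by
  split_ifs with hs
  · rw [floorWindow_of_fract_eq_zero hs, ncard_singleton]
  · rw [floorWindow_of_fract_ne_zero hs, ncard_pair (by simp)]

lemma image_cell_unitSquare (t γ : ℝ) :
    cell t γ '' (Ico 0 1 ×ˢ Ico 0 1) = {c | c.1 ∈ floorWindow t ∧ c.2 ∈ floorWindow (c.1 * γ)} := by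
  ext ⟨k, j⟩
  constructor
  · rintro ⟨⟨x, y⟩, ⟨hx, hy⟩, hc⟩
    simp only [cell, Prod.mk.injEq] at hc
    obtain ⟨rfl, rfl⟩ := hc
    exact ⟨⟨x, hx, rfl⟩, ⟨y, hy, rfl⟩⟩
  · rintro ⟨⟨x, hx, rfl⟩, y, hy, hj⟩
    exact ⟨(x, y), ⟨hx, hy⟩, Prod.ext rfl hj⟩

lemma ncard_image_cell_unitSquare {t : ℝ} (ht : Int.fract t ≠ 0) (γ : ℝ) :
    (cell t γ '' (Ico 0 1 ×ˢ Ico 0 1)).ncard =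
      (floorWindow (⌊t⌋ * γ)).ncard + (floorWindow ((⌊t⌋ + 1) * γ)).ncard := by
  have hsplit : cell t γ '' (Ico 0 1 ×ˢ Ico 0 1) =
      {⌊t⌋} ×ˢ floorWindow (⌊t⌋ * γ) ∪ {⌊t⌋ + 1} ×ˢ floorWindow ((⌊t⌋ + 1) * γ) := by
    rw [image_cell_unitSquare, floorWindow_of_fract_ne_zero ht]
    ext ⟨k, j⟩
    simp only [mem_ofPred_eq, mem_insert_iff, mem_singleton_iff, mem_union, mem_prod]
    constructor
    · rintro ⟨rfl | rfl, hj⟩ <;> push_cast at hj <;> simp [hj]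
    · rintro (⟨rfl, hj⟩ | ⟨rfl, hj⟩) <;> simp [hj]
  have hfin (s : ℝ) : (floorWindow s).Finite := by
    by_cases hs : Int.fract s = 0
    · simp [floorWindow_of_fract_eq_zero hs]
    · simp [floorWindow_of_fract_ne_zero hs]
  rw [hsplit, ncard_union_eq (by simp) ((finite_singleton _).prod (hfin _))
    ((finite_singleton _).prod (hfin _)), ncard_prod, ncard_prod, ncard_singleton, ncard_singleton,
    one_mul, one_mul]

lemma cell_eq_of_mem_Ico (t γ : ℝ) {w w' : ℝ × ℝ}
    (h₁ : w'.1 ∈ Ico w.1 (w.1 + (1 - Int.fract (t + w.1))))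
    (h₂ : w'.2 ∈ Ico w.2 (w.2 + (1 - Int.fract ((cell t γ w).1 * γ + w.2)))) :
    cell t γ w' = cell t γ w := by
  have hk : ⌊t + w'.1⌋ = ⌊t + w.1⌋ :=
    Int.floor_eq_of_mem_Ico (z := t + w.1) ⟨by linarith [h₁.1], by linarith [h₁.2]⟩
  simp only [cell] at h₂ ⊢
  rw [hk]
  congr 1
  exact Int.floor_eq_of_mem_Ico ⟨by linarith [h₂.1], by linarith [h₂.2]⟩

lemma image_cell_eq_of_forall_exists_mem (t γ : ℝ) {D : Set (ℝ × ℝ)} (hD : D ⊆ Ico 0 1 ×ˢ Ico 0 1)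
    (hdense : ∀ w ∈ Ico (0 : ℝ) 1 ×ˢ Ico (0 : ℝ) 1, ∀ δ > 0,
      ∃ d ∈ D, d.1 ∈ Ico w.1 (w.1 + δ) ∧ d.2 ∈ Ico w.2 (w.2 + δ)) :
    cell t γ '' D = cell t γ '' (Ico 0 1 ×ˢ Ico 0 1) := by
  refine (image_mono hD).antisymm ?_
  rintro _ ⟨w, hw, rfl⟩
  set δ₁ := 1 - Int.fract (t + w.1)
  set δ₂ := 1 - Int.fract ((cell t γ w).1 * γ + w.2)
  obtain ⟨d, hdD, hd₁, hd₂⟩ := hdense w hw (min δ₁ δ₂)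
    (lt_min (by linarith [Int.fract_lt_one (t + w.1)])
      (by linarith [Int.fract_lt_one ((cell t γ w).1 * γ + w.2)]))
  refine ⟨d, hdD, cell_eq_of_mem_Ico t γ ?_ ?_⟩
  · exact Ico_subset_Ico_right (by linarith [min_le_left δ₁ δ₂]) hd₁
  · exact Ico_subset_Ico_right (by linarith [min_le_right δ₁ δ₂]) hd₂

def kroneckerSubgroup (θ : ℝ × ℝ) : AddSubgroup (ℝ × ℝ) where
  carrier := {w | ∃ n p q : ℤ, w = (n * θ.1 + p, n * θ.2 + q)}
  zero_mem' := ⟨0, 0, 0, Prod.ext (by simp) (by simp)⟩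
  add_mem' := by
    rintro _ _ ⟨n, p, q, rfl⟩ ⟨n', p', q', rfl⟩
    exact ⟨n + n', p + p', q + q', Prod.ext (by simp; ring) (by simp; ring)⟩
  neg_mem' := by
    rintro _ ⟨n, p, q, rfl⟩
    exact ⟨-n, -p, -q, Prod.ext (by simp; ring) (by simp; ring)⟩

lemma exists_nat_mul_near_int (θ : ℝ × ℝ) {ε : ℝ} (hε : 0 < ε) :
    ∃ m : ℕ, 0 < m ∧ ∃ p q : ℤ, |m * θ.1 - p| < ε ∧ |m * θ.2 - q| < ε := by
  let x : ℕ → ℝ × ℝ := fun k => (Int.fract (k * θ.1), Int.fract (k * θ.2))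
  have hx (k : ℕ) : x k ∈ Icc (0 : ℝ) 1 ×ˢ Icc (0 : ℝ) 1 :=
    ⟨⟨Int.fract_nonneg _, (Int.fract_lt_one _).le⟩, ⟨Int.fract_nonneg _, (Int.fract_lt_one _).le⟩⟩
  obtain ⟨a, -, φ, hφ, hlim⟩ := (isCompact_Icc.prod isCompact_Icc).tendsto_subseq hx
  obtain ⟨N, hN⟩ := Metric.cauchySeq_iff'.1 hlim.cauchySeq ε hε
  have hd := hN (N + 1) N.le_succ
  rw [Prod.dist_eq, max_lt_iff, Real.dist_eq, Real.dist_eq] at hd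
  have hlt : φ N < φ (N + 1) := hφ N.lt_succ_self
  have hdiff (c : ℝ) : ((φ (N + 1) - φ N : ℕ) : ℝ) * c - ((⌊φ (N + 1) * c⌋ - ⌊φ N * c⌋ : ℤ) : ℝ) =
      Int.fract (φ (N + 1) * c) - Int.fract (φ N * c) := by
    rw [Nat.cast_sub hlt.le, Int.fract, Int.fract]
    push_cast
    ring
  exact ⟨_, Nat.sub_pos_of_lt hlt, _, _, (hdiff θ.1).symm ▸ hd.1, (hdiff θ.2).symm ▸ hd.2⟩

lemma exists_ne_zero_forall_smul_mem_closure {E : Type*} [NormedAddCommGroup E]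
    [NormedSpace ℝ E] [ProperSpace E] (G : AddSubgroup E)
    (hG : ∀ ε > 0, ∃ g ∈ G, g ≠ 0 ∧ ‖g‖ < ε) :
    ∃ a : E, a ≠ 0 ∧ ∀ t : ℝ, t • a ∈ closure (G : Set E) := by
  choose g hgG hg0 hgε using fun k : ℕ => hG (1 / (k + 1)) Nat.one_div_pos_of_nat
  have hg_lim : Tendsto (fun k => ‖g k‖) atTop (𝓝 0) :=
    squeeze_zero (fun _ => norm_nonneg _) (fun k => (hgε k).le)
      tendsto_one_div_add_atTop_nhds_zero_nat
  have hu (k : ℕ) : ‖g k‖⁻¹ • g k ∈ Metric.sphere (0 : E) 1 := by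
    rw [mem_sphere_zero_iff_norm, norm_smul, norm_inv, norm_norm,
      inv_mul_cancel₀ (norm_ne_zero_iff.2 (hg0 k))]
  obtain ⟨a, ha, φ, hφ, hlim⟩ := (isCompact_sphere (0 : E) 1).tendsto_subseq hu
  refine ⟨a, ne_zero_of_mem_unit_sphere ⟨a, ha⟩, fun t => ?_⟩
  -- `⌊t / ‖g‖⌋ • g` differs from `t • (‖g‖⁻¹ • g)` by `fract (t / ‖g‖) • g`, of norm below `‖g‖`.
  have herr : Tendsto (fun k => Int.fract (t / ‖g (φ k)‖) • g (φ k)) atTop (𝓝 0) := by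
    refine squeeze_zero_norm (fun k => ?_) (hg_lim.comp hφ.tendsto_atTop)
    rw [norm_smul, Real.norm_of_nonneg (Int.fract_nonneg _)]
    exact mul_le_of_le_one_left (norm_nonneg _) (Int.fract_lt_one _).le
  have hlim' : Tendsto (fun k => ⌊t / ‖g (φ k)‖⌋ • g (φ k)) atTop (𝓝 (t • a)) := by
    have := (hlim.const_smul t).sub herr
    rw [sub_zero] at this
    refine this.congr fun k => ?_
    simp only [Function.comp, smul_smul, ← sub_smul, Int.fract, ← Int.cast_smul_eq_zsmul ℝ]
    ring_nf
  exact mem_closure_of_tendsto hlim' (Eventually.of_forall fun k => zsmul_mem (hgG (φ k)) _)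

lemma dense_of_ker_subset_closure {E F : Type*} [NormedAddCommGroup E] [NormedSpace ℝ E]
    [NormedAddCommGroup F] [NormedSpace ℝ F] [FiniteDimensional ℝ F] (f : E →ₗ[ℝ] F)
    (hf : Function.Surjective f) (G : AddSubgroup E)
    (hker : (LinearMap.ker f : Set E) ⊆ closure G) (hdense : Dense (f '' G)) :
    Dense (G : Set E) := by
  have hsub : f ⁻¹' (f '' G) ⊆ closure G := by
    rintro x ⟨g, hg, hgx⟩
    rw [← add_sub_cancel g x]
    exact G.topologicalClosure.add_mem (subset_closure hg)
      (hker (by simp [LinearMap.mem_ker, hgx]))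
  exact dense_closure.1 ((hdense.preimage (f.isOpenMap_of_finiteDimensional hf)).mono hsub)

def crossWith (a : ℝ × ℝ) : ℝ × ℝ →ₗ[ℝ] ℝ := a.1 • LinearMap.snd ℝ ℝ ℝ - a.2 • LinearMap.fst ℝ ℝ ℝ

lemma crossWith_apply (a w : ℝ × ℝ) : crossWith a w = a.1 * w.2 - a.2 * w.1 := rfl

lemma dense_of_forall_smul_mem_closure {G : AddSubgroup (ℝ × ℝ)} {a : ℝ × ℝ} (ha : a ≠ 0)
    (hline : ∀ t : ℝ, t • a ∈ closure (G : Set (ℝ × ℝ))) (hdense : Dense (crossWith a '' G)) :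
    Dense (G : Set (ℝ × ℝ)) := by
  have hN : a.1 ^ 2 + a.2 ^ 2 ≠ 0 := fun h => by
    obtain ⟨h₁, h₂⟩ := (add_eq_zero_iff_of_nonneg (sq_nonneg _) (sq_nonneg _)).1 h
    exact ha (Prod.ext (pow_eq_zero_iff two_ne_zero |>.1 h₁) (pow_eq_zero_iff two_ne_zero |>.1 h₂))
  have hsurj : Function.Surjective (crossWith a) := fun y =>
    ⟨(y / (a.1 ^ 2 + a.2 ^ 2)) • (-a.2, a.1), by
      rw [crossWith_apply]
      simp only [Prod.smul_mk, smul_eq_mul]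
      field_simp
      ring⟩
  refine dense_of_ker_subset_closure (crossWith a) hsurj G (fun w hw => ?_) hdense
  rw [SetLike.mem_coe, LinearMap.mem_ker, crossWith_apply] at hw
  convert hline ((a.1 * w.1 + a.2 * w.2) / (a.1 ^ 2 + a.2 ^ 2)) using 1
  ext
  · simp only [Prod.smul_fst, smul_eq_mul]; field_simp; linear_combination -a.2 * hw
  · simp only [Prod.smul_snd, smul_eq_mul]; field_simp; linear_combination a.1 * hw

lemma irrational_of_indep {θ₁ θ₂ : ℝ}
    (hindep : ∀ p q r : ℚ, (p : ℝ) + q * θ₁ + r * θ₂ = 0 → p = 0 ∧ q = 0 ∧ r = 0) :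
    Irrational θ₁ := fun ⟨r, hr⟩ => by
  simpa using (hindep (-r) 1 0 (by rw [← hr]; push_cast; ring)).2.1

lemma dense_kroneckerSubgroup {θ : ℝ × ℝ}
    (hindep : ∀ p q r : ℚ, (p : ℝ) + q * θ.1 + r * θ.2 = 0 → p = 0 ∧ q = 0 ∧ r = 0) :
    Dense (kroneckerSubgroup θ : Set (ℝ × ℝ)) := by
  obtain ⟨a, ha, hline⟩ :=
      exists_ne_zero_forall_smul_mem_closure (kroneckerSubgroup θ) fun ε hε => by
    obtain ⟨m, hm, p, q, h₁, h₂⟩ := exists_nat_mul_near_int θ hε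
    refine ⟨(m * θ.1 - p, m * θ.2 - q), ⟨m, -p, -q, by push_cast; ring_nf⟩, fun h => ?_, ?_⟩
    · exact ((irrational_of_indep hindep).natCast_mul hm.ne').ne_int p (sub_eq_zero.1 congr($h.1))
    · rw [Prod.norm_def, max_lt_iff, Real.norm_eq_abs, Real.norm_eq_abs]
      exact ⟨h₁, h₂⟩
  refine dense_of_forall_smul_mem_closure ha hline ?_
  rcases AddSubgroup.dense_or_cyclic ((kroneckerSubgroup θ).map (crossWith a).toAddMonoidHom)
    with hd | ⟨c, hc⟩
  · simpa using hd
  -- A generator `c` would make `1, θ.1, θ.2` rationally dependent.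
  have hmem (w : ℝ × ℝ) (hw : w ∈ kroneckerSubgroup θ) : ∃ k : ℤ, k * c = crossWith a w := by
    have := AddSubgroup.mem_map_of_mem (crossWith a).toAddMonoidHom hw
    rw [hc, AddSubgroup.mem_closure_singleton] at this
    obtain ⟨k, hk⟩ := this
    exact ⟨k, by rw [← zsmul_eq_mul]; exact hk⟩
  obtain ⟨k₁, hk₁⟩ := hmem (1, 0) ⟨0, 1, 0, by simp⟩
  obtain ⟨k₂, hk₂⟩ := hmem (0, 1) ⟨0, 0, 1, by simp⟩
  obtain ⟨k₃, hk₃⟩ := hmem θ ⟨1, 0, 0, by simp⟩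
  simp only [crossWith_apply, mul_zero, mul_one, zero_sub, sub_zero] at hk₁ hk₂ hk₃
  have hc0 : c ≠ 0 := by
    rintro rfl
    exact ha (Prod.ext (by simpa using hk₂.symm) (by simpa using hk₁.symm))
  obtain ⟨-, h₁, h₂⟩ := hindep (-k₃) k₁ k₂ (mul_left_cancel₀ hc0 (by
    push_cast
    linear_combination -hk₃ + θ.1 * hk₁ + θ.2 * hk₂))
  norm_cast at h₁ h₂
  exact (ha (Prod.ext (by simp [← hk₂, h₂]) (by simp [neg_eq_iff_eq_neg.1 hk₁.symm, h₁]))).elim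

lemma exists_nat_mul_add_int_near {θ : ℝ × ℝ}
    (hindep : ∀ p q r : ℚ, (p : ℝ) + q * θ.1 + r * θ.2 = 0 → p = 0 ∧ q = 0 ∧ r = 0)
    (z : ℝ × ℝ) {ε : ℝ} (hε : 0 < ε) :
    ∃ m : ℕ, ∃ p q : ℤ, |m * θ.1 + p - z.1| < ε ∧ |m * θ.2 + q - z.2| < ε := by
  obtain ⟨_, ⟨n, p, q, rfl⟩, hd⟩ :=
    Metric.mem_closure_iff.1 (dense_kroneckerSubgroup hindep z) (ε / 2) (half_pos hε)
  rw [dist_comm, Prod.dist_eq, max_lt_iff, Real.dist_eq, Real.dist_eq] at hd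
  obtain ⟨K, rfl | rfl⟩ := Int.eq_nat_or_neg n
  · exact ⟨K, p, q, by simpa using hd.1.trans (half_lt_self hε),
      by simpa using hd.2.trans (half_lt_self hε)⟩
  -- `-K θ` is corrected by `K` copies of a positive multiple of `θ` close to `ℤ²`.
  obtain ⟨m, hm, p', q', h₁, h₂⟩ :=
    exists_nat_mul_near_int θ (ε := ε / (2 * (K + 1))) (by positivity)
  have hcorrect (c z₀ : ℝ) (p₀ p₀' : ℤ) (h : |((-K : ℤ) : ℝ) * c + p₀ - z₀| < ε / 2)
      (h' : |m * c - p₀'| < ε / (2 * (K + 1))) :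
      |((K * (m - 1) : ℕ) : ℝ) * c + ((p₀ - K * p₀' : ℤ) : ℝ) - z₀| < ε := by
    have hK : (K : ℝ) * |m * c - p₀'| ≤ ε / 2 := by
      calc (K : ℝ) * |m * c - p₀'| ≤ (K + 1) * (ε / (2 * (K + 1))) := by gcongr; linarith
        _ = ε / 2 := by field_simp
    calc |((K * (m - 1) : ℕ) : ℝ) * c + ((p₀ - K * p₀' : ℤ) : ℝ) - z₀|
        = |(((-K : ℤ) : ℝ) * c + p₀ - z₀) + K * (m * c - p₀')| := by
          rw [Nat.cast_mul, Nat.cast_sub hm]; push_cast; ring_nf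
      _ ≤ |((-K : ℤ) : ℝ) * c + p₀ - z₀| + |K * (m * c - p₀')| := abs_add_le _ _
      _ < ε := by rw [abs_mul, Nat.abs_cast]; linarith
  exact ⟨K * (m - 1), p - K * p', q - K * q', hcorrect _ _ _ _ hd.1 h₁, hcorrect _ _ _ _ hd.2 h₂⟩

lemma exists_fract_pair_mem_Ico {α γ : ℝ}
    (hindep : ∀ p q r : ℚ, (p : ℝ) + q * α + r * (α * γ) = 0 → p = 0 ∧ q = 0 ∧ r = 0)
    (hγ : |γ| ≤ 1) (ρ₁ ρ₂ : ℝ) {x y : ℝ} (hx : x ∈ Ico 0 1) (hy : y ∈ Ico 0 1) {δ : ℝ}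
    (hδ : 0 < δ) :
    ∃ i : ℕ, Int.fract (ρ₁ + i * α) ∈ Ico x (x + δ) ∧
      Int.fract (ρ₂ + ⌊ρ₁ + i * α⌋ * γ) ∈ Ico y (y + δ) := by
  set r := min δ (min (1 - x) (1 - y))
  have hr : 0 < r := lt_min hδ (lt_min (by linarith [hx.2]) (by linarith [hy.2]))
  have hrδ : r ≤ δ := min_le_left _ _
  have hrx : r ≤ 1 - x := (min_le_right _ _).trans (min_le_left _ _)
  have hry : r ≤ 1 - y := (min_le_right _ _).trans (min_le_right _ _)
  obtain ⟨i, p, q, h₁, h₂⟩ := exists_nat_mul_add_int_near (θ := (α, α * γ)) hindep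
    ((x + r / 2) - ρ₁, y + r / 2 - ρ₂ - ρ₁ * γ + γ * (x + r / 2)) (ε := r / 4) (by positivity)
  -- Aim at `(x + r / 2, y + r / 2)`: as `⌊ρ₁ + i α⌋ = ρ₁ + i α - x_i`, the second coordinate is
  -- `{ρ₂ + (ρ₁ + i α - x_i) γ}`, controlled by `i α γ` once `x_i` is.
  set e₁ := i * α + p - ((x + r / 2) - ρ₁)
  set e₂ := i * (α * γ) + q - (y + r / 2 - ρ₂ - ρ₁ * γ + γ * (x + r / 2))
  have hγe : |γ * e₁| ≤ r / 4 := by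
    rw [abs_mul]; exact (mul_le_of_le_one_left (abs_nonneg _) hγ).trans h₁.le
  rw [abs_lt] at h₁ h₂
  rw [abs_le] at hγe
  have hx₀ := hx.1
  have hy₀ := hy.1
  have hfract₁ : Int.fract (ρ₁ + i * α) = (x + r / 2) + e₁ :=
    Int.fract_eq_iff.2 ⟨by linarith, by linarith, -p, by push_cast; ring⟩
  have hfloor₁ : (⌊ρ₁ + i * α⌋ : ℝ) = -p := by
    rw [← Int.self_sub_fract, hfract₁]; ring
  have hfract₂ : Int.fract (ρ₂ + ⌊ρ₁ + i * α⌋ * γ) = y + r / 2 + e₂ - γ * e₁ := by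
    rw [hfloor₁]
    exact Int.fract_eq_iff.2 ⟨by linarith, by linarith, -q, by push_cast; ring⟩
  refine ⟨i, ?_, ?_⟩
  · rw [hfract₁]; constructor <;> linarith
  · rw [hfract₂]; constructor <;> linarith

/-- The Parikh vector `(#1, #2, #3)` of a factor of length `n` with `c.1` letters taken from `b`,
`c.2` of which are 3s. -/
def parikhOfCell (n : ℤ) (c : ℤ × ℤ) : ℤ × ℤ × ℤ := (n - c.1, c.1 - c.2, c.2)

lemma parikhOfCell_injective (n : ℤ) : Function.Injective (parikhOfCell n) := by
  rintro ⟨k, j⟩ ⟨k', j'⟩ h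
  simp only [parikhOfCell, Prod.mk.injEq] at h
  ext <;> omega

lemma parikh_fac_colour {α γ : ℝ} (hα : α ∈ Ico 0 1) (hγ : γ ∈ Ico 0 1) (ρ₁ ρ₂ : ℝ) (i n : ℕ) :
    (((fac (colour (sturmian α ρ₁) (fun _ => 1) (sturmian23 γ ρ₂)) i n).count 1 : ℤ),
      ((fac (colour (sturmian α ρ₁) (fun _ => 1) (sturmian23 γ ρ₂)) i n).count 2 : ℤ),
      ((fac (colour (sturmian α ρ₁) (fun _ => 1) (sturmian23 γ ρ₂)) i n).count 3 : ℤ)) =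
    parikhOfCell n (cell (n * α) γ
      (Int.fract (ρ₁ + i * α), Int.fract (ρ₂ - ⌊ρ₁⌋ * γ + ⌊ρ₁ + i * α⌋ * γ))) := by
  set K := (fac (sturmian α ρ₁) i n).count true with hK
  have hKfloor : (K : ℤ) = ⌊n * α + Int.fract (ρ₁ + i * α)⌋ := by
    rw [hK, count_true_fac_sturmian hα, ← Int.floor_add_sub_floor]
    push_cast; ring_nf
  have hJ : ((fac (sturmian γ ρ₂) (countB (sturmian α ρ₁) i) K).count true : ℤ) =
      ⌊((K : ℤ) : ℝ) * γ + Int.fract (ρ₂ - ⌊ρ₁⌋ * γ + ⌊ρ₁ + i * α⌋ * γ)⌋ := by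
    have hB : (countB (sturmian α ρ₁) i : ℝ) = ⌊ρ₁ + i * α⌋ - ⌊ρ₁⌋ := by
      exact_mod_cast countB_sturmian hα ρ₁ i
    rw [count_true_fac_sturmian hγ, ← Int.floor_add_sub_floor]
    push_cast
    rw [hB]
    ring_nf
  have hFK : (fac (sturmian α ρ₁) i n).count false + K = n := by
    rw [hK, List.count_false_add_count_true, length_fac]
  have hJK := List.count_false_add_count_true (fac (sturmian γ ρ₂) (countB (sturmian α ρ₁) i) K)
  rw [length_fac] at hJK
  obtain ⟨h1, h2, h3⟩ := count_fac_sturmian23 γ ρ₂ (countB (sturmian α ρ₁) i) K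
  simp only [count_fac_colour, fac_const, List.count_replicate, ← hK, h1, h2, h3, parikhOfCell,
    cell, ← hKfloor, ← hJ]
  norm_num
  omega

def parikhVectors (v : ℕ → ℕ) (n : ℕ) : Set (ℕ × ℕ × ℕ) :=
  {p | ∃ i, p = ((fac v i n).count 1, (fac v i n).count 2, (fac v i n).count 3)}

lemma ncard_parikhVectors_colour {α γ : ℝ} (hα : α ∈ Ico 0 1) (hγ : γ ∈ Ico 0 1)
    (hindep : ∀ p q r : ℚ, (p : ℝ) + q * α + r * (α * γ) = 0 → p = 0 ∧ q = 0 ∧ r = 0)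
    (ρ₁ ρ₂ : ℝ) (n : ℕ) :
    (parikhVectors (colour (sturmian α ρ₁) (fun _ => 1) (sturmian23 γ ρ₂)) n).ncard =
      (cell (n * α) γ '' (Ico 0 1 ×ˢ Ico 0 1)).ncard := by
  let ι : ℕ × ℕ × ℕ → ℤ × ℤ × ℤ := Prod.map Nat.cast (Prod.map Nat.cast Nat.cast)
  have hι : Function.Injective ι :=
    Nat.cast_injective.prodMap (Nat.cast_injective.prodMap Nat.cast_injective)
  let pt (i : ℕ) : ℝ × ℝ :=
    (Int.fract (ρ₁ + i * α), Int.fract (ρ₂ - ⌊ρ₁⌋ * γ + ⌊ρ₁ + i * α⌋ * γ))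
  have himage : ι '' parikhVectors (colour (sturmian α ρ₁) (fun _ => 1) (sturmian23 γ ρ₂)) n =
      parikhOfCell n '' (cell (n * α) γ '' range pt) := by
    rw [← range_comp, ← range_comp]
    ext q
    constructor
    · rintro ⟨_, ⟨i, rfl⟩, rfl⟩
      exact ⟨i, (parikh_fac_colour hα hγ ρ₁ ρ₂ i n).symm⟩
    · rintro ⟨i, rfl⟩
      exact ⟨_, ⟨i, rfl⟩, parikh_fac_colour hα hγ ρ₁ ρ₂ i n⟩
  have hdense : ∀ w ∈ Ico (0 : ℝ) 1 ×ˢ Ico (0 : ℝ) 1, ∀ δ > 0,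
      ∃ d ∈ range pt, d.1 ∈ Ico w.1 (w.1 + δ) ∧ d.2 ∈ Ico w.2 (w.2 + δ) := by
    intro w hw δ hδ
    obtain ⟨i, hi⟩ := exists_fract_pair_mem_Ico hindep (abs_le.2 ⟨by linarith [hγ.1], hγ.2.le⟩) ρ₁
      (ρ₂ - ⌊ρ₁⌋ * γ) hw.1 hw.2 hδ
    exact ⟨pt i, mem_range_self i, hi⟩
  have hpt : range pt ⊆ Ico 0 1 ×ˢ Ico 0 1 := by
    rintro _ ⟨i, rfl⟩
    exact ⟨⟨Int.fract_nonneg _, Int.fract_lt_one _⟩, ⟨Int.fract_nonneg _, Int.fract_lt_one _⟩⟩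
  rw [← ncard_image_of_injective _ hι, himage,
    ncard_image_of_injective _ (parikhOfCell_injective n),
    image_cell_eq_of_forall_exists_mem _ _ hpt hdense]

theorem stmt_12_general (α ρ₁ γ ρ₂ : ℝ) (hα : α ∈ Set.Ioo (0:ℝ) 1) (hγ : γ ∈ Set.Ioo (0:ℝ) 1)
    (hindep : ∀ p q r : ℚ, (p : ℝ) + q * α + r * (α * γ) = 0 → p = 0 ∧ q = 0 ∧ r = 0)
    (n : ℕ) :
    (n ≥ ⌈(1 : ℝ) / α⌉₊ →
      {p : ℕ × ℕ × ℕ | ∃ i,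
          p = ((fac (colour (sturmian α ρ₁) (fun _ => 1) (sturmian23 γ ρ₂)) i n).count 1,
               (fac (colour (sturmian α ρ₁) (fun _ => 1) (sturmian23 γ ρ₂)) i n).count 2,
               (fac (colour (sturmian α ρ₁) (fun _ => 1) (sturmian23 γ ρ₂)) i n).count 3)}.ncard = 4) ∧
    (1 ≤ n → n ≤ ⌊(1 : ℝ) / α⌋₊ →
      {p : ℕ × ℕ × ℕ | ∃ i,
          p = ((fac (colour (sturmian α ρ₁) (fun _ => 1) (sturmian23 γ ρ₂)) i n).count 1,
               (fac (colour (sturmian α ρ₁) (fun _ => 1) (sturmian23 γ ρ₂)) i n).count 2,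
               (fac (colour (sturmian α ρ₁) (fun _ => 1) (sturmian23 γ ρ₂)) i n).count 3)}.ncard = 3) := by
  have hcount := ncard_parikhVectors_colour (Ioo_subset_Ico_self hα) (Ioo_subset_Ico_self hγ)
    hindep ρ₁ ρ₂ n
  have hαirr : Irrational α := irrational_of_indep hindep
  have hγirr : Irrational γ := fun ⟨r, hr⟩ => by
    simpa using (hindep 0 r (-1) (by rw [← hr]; push_cast; ring)).2.2
  have hnα (hn : 1 ≤ n) : Int.fract (n * α) ≠ 0 := by
    simpa using hαirr.fract_intCast_mul_ne_zero (k := n) (by omega)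
  refine ⟨fun hn => ?_, fun hn₁ hn₂ => ?_⟩
  · have hnα₁ : 1 ≤ (n : ℝ) * α := by rwa [ge_iff_le, Nat.ceil_le, div_le_iff₀ hα.1] at hn
    have hk : 1 ≤ ⌊(n : ℝ) * α⌋ := Int.le_floor.2 (by exact_mod_cast hnα₁)
    have hn₁ : 1 ≤ n := by
      exact_mod_cast hnα₁.trans (mul_le_of_le_one_right (Nat.cast_nonneg n) hα.2.le)
    change (parikhVectors _ n).ncard = 4
    rw [hcount, ncard_image_cell_unitSquare (hnα hn₁) γ,
      ncard_floorWindow, ncard_floorWindow, if_neg (hγirr.fract_intCast_mul_ne_zero (by omega)),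
      if_neg (by simpa using hγirr.fract_intCast_mul_ne_zero (k := ⌊(n : ℝ) * α⌋ + 1) (by omega))]
  · have hnα₁ : (n : ℝ) * α < 1 := by
      have h : (n : ℝ) * α ≤ 1 := by
        rwa [Nat.le_floor_iff (one_div_nonneg.2 hα.1.le), le_div_iff₀ hα.1] at hn₂
      exact h.lt_of_ne fun h₁ => hnα hn₁ (by rw [h₁, Int.fract_one])
    have hk : ⌊(n : ℝ) * α⌋ = 0 :=
      Int.floor_eq_zero_iff.2 ⟨mul_nonneg n.cast_nonneg hα.1.le, hnα₁⟩
    change (parikhVectors _ n).ncard = 3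
    rw [hcount, ncard_image_cell_unitSquare (hnα hn₁) γ, hk, ncard_floorWindow, ncard_floorWindow,
      if_pos (by simp), if_neg (by simpa using hγirr.fract_intCast_mul_ne_zero one_ne_zero)]

theorem stmt_12 (α ρ₁ γ ρ₂ : ℝ) (hα : α ∈ Set.Ioo (0:ℝ) 1) (hγ : γ ∈ Set.Ioo (0:ℝ) 1)
    (hρ₁ : ρ₁ ∈ Set.Ico (0:ℝ) 1) (hρ₂ : ρ₂ ∈ Set.Ico (0:ℝ) 1)
    (hindep : ∀ p q r : ℚ, (p : ℝ) + q * α + r * (α * γ) = 0 → p = 0 ∧ q = 0 ∧ r = 0)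
    (n : ℕ) :
    (n ≥ ⌈(1 : ℝ) / α⌉₊ →
      {p : ℕ × ℕ × ℕ | ∃ i,
          p = ((fac (colour (sturmian α ρ₁) (fun _ => 1) (sturmian23 γ ρ₂)) i n).count 1,
               (fac (colour (sturmian α ρ₁) (fun _ => 1) (sturmian23 γ ρ₂)) i n).count 2,
               (fac (colour (sturmian α ρ₁) (fun _ => 1) (sturmian23 γ ρ₂)) i n).count 3)}.ncard = 4) ∧
    (1 ≤ n → n ≤ ⌊(1 : ℝ) / α⌋₊ →
      {p : ℕ × ℕ × ℕ | ∃ i,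
          p = ((fac (colour (sturmian α ρ₁) (fun _ => 1) (sturmian23 γ ρ₂)) i n).count 1,
               (fac (colour (sturmian α ρ₁) (fun _ => 1) (sturmian23 γ ρ₂)) i n).count 2,
               (fac (colour (sturmian α ρ₁) (fun _ => 1) (sturmian23 γ ρ₂)) i n).count 3)}.ncard = 3) :=
  stmt_12_general α ρ₁ γ ρ₂ hα hγ hindep n
end
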